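/- Let g be the real Lie algebra with basis η₁,η₂,η₃ and brackets [η₁,η₂] = η₂+η₃, [η₃,η₁] = -η₃, [η₂,η₃] = 0 (the algebra a_{3,6}). Then g does not admit a basis ζ₁,ζ₂,ζ₃ in which every pair of basis vectors spans a two-dimensional Lie subalgebra. -/

import Mathlib

/-!
Relative to `η`, let `u, v` be the coordinate vectors of `x, y` and `c = u × v` the normal
vector of the plane they span. In `a_{3,6}` the bracket `⁅x, y⁆` has coordinates
`(0, c₂, c₂ - c₁)`; if the plane is a subalgebra, this vector is orthogonal to `c`, so
`c₂² = 0`. For a Nijenhuis eigenbasis `ζ` this kills every `2 × 2` minor of the first two rows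
of the change-of-basis matrix from `η` to `ζ`, hence its determinant, which is impossible.
-/

open Matrix

namespace Module.Basis

section CrossProduct

variable {R M : Type*} [CommRing R] [AddCommGroup M] [Module R M] (η : Basis (Fin 3) R M)

theorem equivFun_dotProduct_cross_eq_zero_of_mem_span_pair {x y z : M}
    (hz : z ∈ Submodule.span R {x, y}) :
    η.equivFun z ⬝ᵥ η.equivFun x ⨯₃ η.equivFun y = 0 := by
  obtain ⟨s, t, rfl⟩ := Submodule.mem_span_pair.mp hz
  simp only [map_add, map_smul, add_dotProduct, smul_dotProduct, dot_self_cross, dot_cross_self,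
    smul_zero, add_zero]

theorem exists_cross_apply_two_ne_zero [Nontrivial R] (ζ : Basis (Fin 3) R M) :
    ∃ i j, (η.equivFun (ζ i) ⨯₃ η.equivFun (ζ j)) 2 ≠ 0 := by
  by_contra! h
  set P := η.toMatrix ζ
  have hrows : P 0 ⨯₃ P 1 = 0 := by
    ext k
    fin_cases k
    · simpa [P, cross_apply, toMatrix_apply, mul_comm] using h 1 2
    · simpa [P, cross_apply, toMatrix_apply, mul_comm] using h 2 0
    · simpa [P, cross_apply, toMatrix_apply, mul_comm] using h 0 1
  have hdet : P.det = P 2 ⬝ᵥ P 0 ⨯₃ P 1 := by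
    rw [← triple_product_permutation, ← triple_product_permutation, triple_product_eq_det]
    congr 1
    ext i : 1
    fin_cases i <;> rfl
  let _ := η.invertibleToMatrix ζ
  exact (isUnit_det_of_invertible P).ne_zero (by rw [hdet, hrows, dotProduct_zero])

end CrossProduct

theorem lie_eq_cross_smul {R L : Type*} [CommRing R] [LieRing L] [LieAlgebra R L]
    (η : Basis (Fin 3) R L) (x y : L) :
    ⁅x, y⁆ = (η.equivFun x ⨯₃ η.equivFun y) 0 • ⁅η 1, η 2⁆
      + (η.equivFun x ⨯₃ η.equivFun y) 1 • ⁅η 2, η 0⁆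
      + (η.equivFun x ⨯₃ η.equivFun y) 2 • ⁅η 0, η 1⁆ := by
  conv_lhs => rw [← η.sum_equivFun x, ← η.sum_equivFun y]
  simp only [Fin.sum_univ_three, add_lie, lie_add, smul_lie, lie_smul, lie_self, cross_apply]
  rw [← lie_skew (η 1) (η 0), ← lie_skew (η 2) (η 1), ← lie_skew (η 0) (η 2)]
  simp only [cons_val_zero, cons_val_one, cons_val_two, head_cons, tail_cons]
  module

end Module.Basis

theorem cross_apply_two_eq_zero_of_lie_mem_span {R L : Type*} [CommRing R] [NoZeroDivisors R]
    [LieRing L] [LieAlgebra R L] (η : Module.Basis (Fin 3) R L)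
    (h12 : ⁅η 0, η 1⁆ = η 1 + η 2) (h31 : ⁅η 2, η 0⁆ = -η 2) (h23 : ⁅η 1, η 2⁆ = 0)
    {x y : L} (h : ⁅x, y⁆ ∈ Submodule.span R {x, y}) :
    (η.equivFun x ⨯₃ η.equivFun y) 2 = 0 := by
  obtain ⟨c, hc⟩ : ∃ c, η.equivFun x ⨯₃ η.equivFun y = c := ⟨_, rfl⟩
  have hbracket : η.equivFun ⁅x, y⁆ = ![0, c 2, c 2 - c 1] := by
    rw [η.lie_eq_cross_smul, hc, h12, h31, h23]
    ext k
    fin_cases k <;> simp [sub_eq_neg_add]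
  have horth := η.equivFun_dotProduct_cross_eq_zero_of_mem_span_pair h
  rw [hbracket, hc] at horth
  have hsq : c 2 ^ 2 = 0 := by
    simp only [dotProduct, Fin.sum_univ_three, cons_val_zero, cons_val_one, cons_val_two,
      head_cons, tail_cons, zero_mul, zero_add] at horth
    linear_combination horth
  rw [hc]
  exact pow_eq_zero_iff two_ne_zero |>.mp hsq

/-- The real Lie algebra `a_{3,6}` with brackets `[η₁,η₂] = η₂+η₃`, `[η₃,η₁] = -η₃`,
`[η₂,η₃] = 0` admits no Nijenhuis eigenbasis. -/
theorem a36_no_nijenhuis_eigenbasis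
    {g : Type*} [LieRing g] [LieAlgebra ℝ g]
    (η : Module.Basis (Fin 3) ℝ g)
    (h12 : ⁅η 0, η 1⁆ = η 1 + η 2) (h31 : ⁅η 2, η 0⁆ = -η 2)
    (h23 : ⁅η 1, η 2⁆ = 0) :
    ¬ ∃ ζ : Module.Basis (Fin 3) ℝ g, ∀ i j : Fin 3,
      ⁅ζ i, ζ j⁆ ∈ Submodule.span ℝ ({ζ i, ζ j} : Set g) := by
  rintro ⟨ζ, hζ⟩
  obtain ⟨i, j, hij⟩ := η.exists_cross_apply_two_ne_zero ζ
  exact hij (cross_apply_two_eq_zero_of_lie_mem_span η h12 h31 h23 (hζ i j))
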